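/- Fix complex numbers x^{ia} for i, a ∈ {1,2}. On ℂ² × ℂ² with coordinates (u^+_1, u^+_2, u^-_1, u^-_2), define x^{±a} = Σ_i x^{ia} u^±_i, J = ½ (x^{+1} x^{−2} + x^{−1} x^{+2}), f^{+1} = e^{J} x^{+1}, f^{+2} = e^{−J} x^{+2}, and the derivation ∂^{++} = Σ_i u^+_i ∂/∂u^-_i. Then, identically on ℂ² × ℂ²: ∂^{++} f^{+1} = (f^{+1})² f^{+2} and ∂^{++} f^{+2} = −f^{+1} (f^{+2})². Equivalently, (f^{+1}, f^{+2}) solves the harmonic constraint ∂^{++} f^{+a} = Σ_b Ω^{ab} ∂𝓛^{+4}/∂f^{+b} for the Taub-NUT prepotential 𝓛^{+4}(f) = −½ (f^{+1})² (f^{+2})², where Ω^{12} = −Ω^{21} = −1, Ω^{11} = Ω^{22} = 0. -/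

import Mathlib

noncomputable section

/-- `x^{±a} = Σ_i x^{ia} u^±_i` (applied to `u = u^+` or `u = u^-`). -/
def xharm (x : Fin 2 → Fin 2 → ℂ) (a : Fin 2) (u : Fin 2 → ℂ) : ℂ := ∑ i, x i a * u i

/-- `J = ½ (x^{+1} x^{-2} + x^{-1} x^{+2})`. -/
def Jbr (x : Fin 2 → Fin 2 → ℂ) (up um : Fin 2 → ℂ) : ℂ :=
  (1 / 2 : ℂ) * (xharm x 0 up * xharm x 1 um + xharm x 0 um * xharm x 1 up)

/-- The solution `f^{+1} = e^J x^{+1}`, `f^{+2} = e^{-J} x^{+2}`. -/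
def fsol (x : Fin 2 → Fin 2 → ℂ) (a : Fin 2) (up um : Fin 2 → ℂ) : ℂ :=
  if a = 0 then Complex.exp (Jbr x up um) * xharm x 0 up
  else Complex.exp (-Jbr x up um) * xharm x 1 up

/-- The harmonic derivative `∂^{++} = Σ_i u^+_i ∂/∂u^-_i` applied to a function of
`(u^+, u^-)`. -/
noncomputable def dpp (g : (Fin 2 → ℂ) → (Fin 2 → ℂ) → ℂ) (up um : Fin 2 → ℂ) : ℂ :=
  ∑ i, up i * fderiv ℂ (g up) um (Pi.single i 1)

/-- The symplectic form `Ω^{ab}` with `Ω^{12} = -Ω^{21} = -1`. -/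
def OmUp : Fin 2 → Fin 2 → ℂ := fun a b =>
  if a = 0 ∧ b = 1 then -1 else if a = 1 ∧ b = 0 then 1 else 0

/-- The Taub-NUT prepotential `𝓛^{+4}(f) = -½ (f^{+1})² (f^{+2})²`. -/
def LTN : (Fin 2 → ℂ) → ℂ := fun f => -(1 / 2 : ℂ) * (f 0) ^ 2 * (f 1) ^ 2

/-!
`∂^{++}` differentiates only in `u^-`, so it kills `x^{+a}` and sends `x^{-a}` to `x^{+a}`; hence
`∂^{++} J = x^{+1} x^{+2}` and `∂^{++} (e^{±J} x^{+a}) = ± x^{+1} x^{+2} e^{±J} x^{+a}`. Since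
`e^J e^{-J} = 1`, the factor `x^{+1} x^{+2}` equals `f^{+1} f^{+2}`, which gives both constraints.
-/

theorem dpp_eq_fderiv_apply (g : (Fin 2 → ℂ) → (Fin 2 → ℂ) → ℂ) (up um : Fin 2 → ℂ) :
    dpp g up um = fderiv ℂ (g up) um up := by
  set L := fderiv ℂ (g up) um
  conv_rhs => rw [pi_eq_sum_univ' up, map_sum]
  simp [dpp, L]

def xharmCLM (x : Fin 2 → Fin 2 → ℂ) (a : Fin 2) : (Fin 2 → ℂ) →L[ℂ] ℂ :=
  ∑ i, x i a • ContinuousLinearMap.proj i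

@[simp]
theorem xharmCLM_apply (x : Fin 2 → Fin 2 → ℂ) (a : Fin 2) (u : Fin 2 → ℂ) :
    xharmCLM x a u = xharm x a u := by
  simp [xharmCLM, xharm]

theorem hasFDerivAt_xharm (x : Fin 2 → Fin 2 → ℂ) (a : Fin 2) (u : Fin 2 → ℂ) :
    HasFDerivAt (xharm x a) (xharmCLM x a) u := by
  convert (xharmCLM x a).hasFDerivAt using 1
  ext v
  simp

theorem hasFDerivAt_Jbr (x : Fin 2 → Fin 2 → ℂ) (up um : Fin 2 → ℂ) :
    HasFDerivAt (Jbr x up)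
      ((1 / 2 : ℂ) • (xharm x 0 up • xharmCLM x 1 + xharm x 1 up • xharmCLM x 0)) um :=
  (((hasFDerivAt_xharm x 1 um).const_mul (xharm x 0 up)).add
    ((hasFDerivAt_xharm x 0 um).mul_const (xharm x 1 up))).const_mul (1 / 2 : ℂ)

theorem dpp_exp_Jbr_mul (x : Fin 2 → Fin 2 → ℂ) (c : ℂ) (k : (Fin 2 → ℂ) → ℂ)
    (up um : Fin 2 → ℂ) :
    dpp (fun up u => Complex.exp (c * Jbr x up u) * k up) up um =
      c * (xharm x 0 up * xharm x 1 up) * (Complex.exp (c * Jbr x up um) * k up) := by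
  rw [dpp_eq_fderiv_apply,
    ((((hasFDerivAt_Jbr x up um).const_mul c).cexp).mul_const (k up)).fderiv]
  simp
  ring

theorem fsol_zero_eq (x : Fin 2 → Fin 2 → ℂ) :
    fsol x 0 = fun up u => Complex.exp (Jbr x up u) * xharm x 0 up := by
  funext up u
  simp [fsol]

theorem fsol_one_eq (x : Fin 2 → Fin 2 → ℂ) :
    fsol x 1 = fun up u => Complex.exp (-Jbr x up u) * xharm x 1 up := by
  funext up u
  simp [fsol]

theorem fsol_zero_mul_fsol_one (x : Fin 2 → Fin 2 → ℂ) (up um : Fin 2 → ℂ) :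
    fsol x 0 up um * fsol x 1 up um = xharm x 0 up * xharm x 1 up := by
  rw [fsol_zero_eq, fsol_one_eq, mul_mul_mul_comm, ← Complex.exp_add, add_neg_cancel,
    Complex.exp_zero, one_mul]

theorem dpp_fsol_zero (x : Fin 2 → Fin 2 → ℂ) (up um : Fin 2 → ℂ) :
    dpp (fsol x 0) up um = fsol x 0 up um ^ 2 * fsol x 1 up um := by
  calc dpp (fsol x 0) up um = (xharm x 0 up * xharm x 1 up) * fsol x 0 up um := by
        simpa [fsol_zero_eq] using dpp_exp_Jbr_mul x 1 (xharm x 0) up um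
    _ = fsol x 0 up um ^ 2 * fsol x 1 up um := by
        rw [← fsol_zero_mul_fsol_one]; ring

theorem dpp_fsol_one (x : Fin 2 → Fin 2 → ℂ) (up um : Fin 2 → ℂ) :
    dpp (fsol x 1) up um = -(fsol x 0 up um * fsol x 1 up um ^ 2) := by
  calc dpp (fsol x 1) up um = -(xharm x 0 up * xharm x 1 up) * fsol x 1 up um := by
        simpa [fsol_one_eq] using dpp_exp_Jbr_mul x (-1) (xharm x 1) up um
    _ = -(fsol x 0 up um * fsol x 1 up um ^ 2) := by
        rw [← fsol_zero_mul_fsol_one]; ring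

theorem hasFDerivAt_LTN (p : Fin 2 → ℂ) :
    HasFDerivAt LTN (-(p 0 * p 1 ^ 2) • ContinuousLinearMap.proj 0
      - (p 0 ^ 2 * p 1) • ContinuousLinearMap.proj 1 : (Fin 2 → ℂ) →L[ℂ] ℂ) p := by
  have hcoord (i : Fin 2) : HasFDerivAt (fun f : Fin 2 → ℂ => f i)
      (ContinuousLinearMap.proj i : (Fin 2 → ℂ) →L[ℂ] ℂ) p :=
    hasFDerivAt_apply i p
  have h := (((hcoord 0).pow 2).const_mul (-(1 / 2 : ℂ))).mul ((hcoord 1).pow 2)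
  refine h.congr_fderiv ?_
  ext v
  simp
  ring

/-- `f^{+1} = e^J x^{+1}`, `f^{+2} = e^{-J} x^{+2}` solve identically on
`ℂ² × ℂ²` the Taub-NUT harmonic constraints `∂^{++} f^{+1} = (f^{+1})² f^{+2}`,
`∂^{++} f^{+2} = -f^{+1} (f^{+2})²`, i.e. `∂^{++} f^{+a} = Ω^{ab} ∂𝓛^{+4}/∂f^{+b}` for
`𝓛^{+4} = -½ (f^{+1})² (f^{+2})²`. -/
theorem stmt15 (x : Fin 2 → Fin 2 → ℂ) (up um : Fin 2 → ℂ) :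
    (dpp (fsol x 0) up um = (fsol x 0 up um) ^ 2 * fsol x 1 up um ∧
     dpp (fsol x 1) up um = -(fsol x 0 up um * (fsol x 1 up um) ^ 2)) ∧
    (∀ a, dpp (fsol x a) up um =
      ∑ b, OmUp a b * fderiv ℂ LTN (fun c => fsol x c up um) (Pi.single b 1)) := by
  refine ⟨⟨dpp_fsol_zero x up um, dpp_fsol_one x up um⟩, fun a => ?_⟩
  fin_cases a <;> simp [(hasFDerivAt_LTN _).fderiv, OmUp, dpp_fsol_zero, dpp_fsol_one]
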